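/- arXiv:1912.03775 — 2 statements merged into one kernel-verified Lean document; each statement's English description precedes it below -/
import Mathlib

section
/- For the Joseph form Σ⁺(K) = (I − KC)Σ⁻(I − KC)ᵀ + K R Kᵀ with Σ⁻ PSD and R positive definite, the Kalman gain K* = Σ⁻Cᵀ (C Σ⁻ Cᵀ + R)^{-1} minimizes Σ⁺(K) in the Loewner order: Σ⁺(K*) ⪯ Σ⁺(K) for all K. -/
open Matrix

theorem kalman_gain_optimal {n m : ℕ}
    (Sig : Matrix (Fin n) (Fin n) ℝ) (hSig : Sig.PosSemidef)
    (C : Matrix (Fin m) (Fin n) ℝ)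
    (R : Matrix (Fin m) (Fin m) ℝ) (hR : R.PosDef)
    (K : Matrix (Fin n) (Fin m) ℝ) :
    (((1 - K * C) * Sig * (1 - K * C)ᵀ + K * R * Kᵀ) -
      ((1 - (Sig * Cᵀ * (C * Sig * Cᵀ + R)⁻¹) * C) * Sig *
        (1 - (Sig * Cᵀ * (C * Sig * Cᵀ + R)⁻¹) * C)ᵀ +
        (Sig * Cᵀ * (C * Sig * Cᵀ + R)⁻¹) * R * (Sig * Cᵀ * (C * Sig * Cᵀ + R)⁻¹)ᵀ)).PosSemidef := by
  set S : Matrix (Fin m) (Fin m) ℝ := C * Sig * Cᵀ + R with hSdef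
  have hCSC : (C * Sig * Cᵀ).PosSemidef := by
    have := hSig.mul_mul_conjTranspose_same C
    rwa [conjTranspose_eq_transpose_of_trivial] at this
  have hS : S.PosDef := Matrix.PosDef.posSemidef_add hCSC hR
  have hSsymm : Sᵀ = S := by
    have := hS.isHermitian
    rwa [IsHermitian, conjTranspose_eq_transpose_of_trivial] at this
  have hSigsymm : Sigᵀ = Sig := by
    have := hSig.isHermitian
    rwa [IsHermitian, conjTranspose_eq_transpose_of_trivial] at this
  have hSinv : S * S⁻¹ = 1 := mul_nonsing_inv S (isUnit_iff_isUnit_det S |>.1 hS.isUnit)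
  have hSinv' : S⁻¹ * S = 1 := nonsing_inv_mul S (isUnit_iff_isUnit_det S |>.1 hS.isUnit)
  have hSinvsymm : (S⁻¹)ᵀ = S⁻¹ := by rw [transpose_nonsing_inv, hSsymm]
  set Ks : Matrix (Fin n) (Fin m) ℝ := Sig * Cᵀ * S⁻¹ with hKs
  have h1 : Ks * S = Sig * Cᵀ := by
    rw [hKs, Matrix.mul_assoc, hSinv', Matrix.mul_one]
  have h2 : S * Ksᵀ = C * Sig := by
    rw [hKs]
    simp [transpose_mul, hSinvsymm, hSigsymm, ← Matrix.mul_assoc, hSinv]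
  have expand : ∀ (A : Matrix (Fin n) (Fin m) ℝ),
      (1 - A * C) * Sig * (1 - A * C)ᵀ + A * R * Aᵀ =
        Sig - A * (C * Sig) - Sig * Cᵀ * Aᵀ + A * S * Aᵀ := by
    intro A
    rw [hSdef]
    simp only [Matrix.sub_mul, Matrix.mul_sub, Matrix.mul_add, Matrix.add_mul,
      transpose_sub, transpose_mul, transpose_one, Matrix.one_mul, Matrix.mul_one,
      hSigsymm, Matrix.mul_assoc]
    abel
  have key : ((1 - K * C) * Sig * (1 - K * C)ᵀ + K * R * Kᵀ) -
      ((1 - Ks * C) * Sig * (1 - Ks * C)ᵀ + Ks * R * Ksᵀ)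
      = (K - Ks) * S * (K - Ks)ᵀ := by
    rw [expand K, expand Ks]
    have e1 : Ks * S * Kᵀ = Sig * Cᵀ * Kᵀ := by rw [h1]
    have e2 : K * S * Ksᵀ = K * (C * Sig) := by rw [Matrix.mul_assoc, h2]
    have e3 : Ks * S * Ksᵀ = Ks * (C * Sig) := by rw [Matrix.mul_assoc, h2]
    have e4 : Ks * (C * Sig) = Sig * Cᵀ * Ksᵀ := by
      rw [← h2, ← Matrix.mul_assoc, h1]
    simp only [Matrix.sub_mul, Matrix.mul_sub, transpose_sub, e1, e2, e3, e4]
    abel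
  rw [key]
  have := hS.posSemidef.mul_mul_conjTranspose_same (K - Ks)
  rwa [conjTranspose_eq_transpose_of_trivial] at this
end

section
/- Let Σ⁻ be PSD, C a matrix, and R_s, R_d PSD with R_s + R_d positive definite (or CΣ⁻Cᵀ + R_s + R_d invertible). Then the matrix inequality Q ⪰ M(I−KC)Σ⁻(I−KC)ᵀMᵀ + MK(R_s + R_d)KᵀMᵀ holds if and only if the 4×4 block matrix [[Q, M(I−KC)√Σ⁻, MK, MK],[√Σ⁻(I−KC)ᵀMᵀ, I, 0, 0],[KᵀMᵀ, 0, R_s^{-1}, 0],[KᵀMᵀ, 0, 0, R_d^{-1}]] is positive semidefinite, where √Σ⁻ is the PSD square root of Σ⁻. -/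
/-!
Two Schur complements. The lower-right block `diag(R_s⁻¹, R_d⁻¹)` is positive definite with
inverse `diag(R_s, R_d)`, so eliminating it subtracts `MK(R_s + R_d)KᵀMᵀ` from the `Q` block.
Eliminating the remaining identity block then subtracts `BBᵀ` with `B = M(I - KC)√Σ⁻`, which is
`M(I - KC)Σ⁻(I - KC)ᵀMᵀ` because `√Σ⁻` is symmetric and squares to `Σ⁻`.
-/

open Matrix

/-- The PSD square root of a PSD matrix, as `Matrix.PosSemidef.sqrt` was defined in Mathlib
of December 2024 (it has since been removed). -/
noncomputable def Matrix.PosSemidef.sqrt {n : Type*} [Fintype n] [DecidableEq n]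
    {A : Matrix n n ℝ} (hA : A.PosSemidef) : Matrix n n ℝ :=
  (hA.1.eigenvectorUnitary : Matrix n n ℝ) *
    diagonal ((↑) ∘ (Real.sqrt) ∘ hA.1.eigenvalues) *
    (star (hA.1.eigenvectorUnitary : Matrix n n ℝ))

open scoped ComplexOrder

namespace Matrix

lemma PosSemidef.sqrt_isHermitian {n : Type*} [Fintype n] [DecidableEq n]
    {A : Matrix n n ℝ} (hA : A.PosSemidef) : hA.sqrt.IsHermitian := by
  simp only [IsHermitian, PosSemidef.sqrt, star_eq_conjTranspose, conjTranspose_mul,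
    conjTranspose_conjTranspose, diagonal_conjTranspose, star_trivial, Matrix.mul_assoc]

lemma PosSemidef.sqrt_mul_self {n : Type*} [Fintype n] [DecidableEq n]
    {A : Matrix n n ℝ} (hA : A.PosSemidef) : hA.sqrt * hA.sqrt = A := by
  set U : Matrix n n ℝ := (hA.1.eigenvectorUnitary : Matrix n n ℝ)
  set D : Matrix n n ℝ := diagonal ((↑) ∘ Real.sqrt ∘ hA.1.eigenvalues)
  have hU : star U * U = 1 := Unitary.coe_star_mul_self _
  have hDD : D * D = diagonal (RCLike.ofReal ∘ hA.1.eigenvalues) := by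
    rw [diagonal_mul_diagonal]
    congr 1
    ext j
    exact Real.mul_self_sqrt (hA.eigenvalues_nonneg j)
  calc hA.sqrt * hA.sqrt = U * D * (star U * U) * D * star U := by
        simp only [PosSemidef.sqrt, U, D, Matrix.mul_assoc]
    _ = A := by
        rw [hU, Matrix.mul_one, Matrix.mul_assoc U, hDD]
        conv_rhs => rw [hA.1.spectral_theorem, Unitary.conjStarAlgAut_apply]

theorem fromBlocks_sub {α l m n o : Type*} [Sub α] (A : Matrix n l α) (B : Matrix n m α)
    (C : Matrix o l α) (D : Matrix o m α) (A' : Matrix n l α) (B' : Matrix n m α)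
    (C' : Matrix o l α) (D' : Matrix o m α) :
    fromBlocks A B C D - fromBlocks A' B' C' D' =
      fromBlocks (A - A') (B - B') (C - C') (D - D') := by
  ext (_ | _) (_ | _) <;> rfl

variable {𝕜 l m n : Type*} [RCLike 𝕜]

theorem PosDef.fromBlocks_zero_zero [Fintype m] [Fintype n] [DecidableEq m] [DecidableEq n]
    {A : Matrix m m 𝕜} {D : Matrix n n 𝕜} (hA : A.PosDef) (hD : D.PosDef) :
    (fromBlocks A 0 0 D).PosDef := by
  have : Invertible D := hD.isUnit.invertible
  have hpsd : (fromBlocks A 0 0 D).PosSemidef := by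
    simpa using (PosDef.fromBlocks₂₂ A (0 : Matrix m n 𝕜) hD).2 (by simpa using hA.posSemidef)
  exact hpsd.posDef_iff_isUnit.2 (isUnit_fromBlocks_zero₁₂.2 ⟨hA.isUnit, hD.isUnit⟩)

theorem inv_fromBlocks_zero_zero [Fintype m] [Fintype n] [DecidableEq m] [DecidableEq n]
    {A : Matrix m m 𝕜} {D : Matrix n n 𝕜}
    (hA : IsUnit A) (hD : IsUnit D) : (fromBlocks A 0 0 D)⁻¹ = fromBlocks A⁻¹ 0 0 D⁻¹ := by
  simp [inv_fromBlocks_zero₂₁_of_isUnit_iff A 0 D (iff_of_true hA hD)]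

theorem posSemidef_fromBlocks_one_iff [Fintype m] [Fintype n] [DecidableEq n]
    (A : Matrix m m 𝕜) (B : Matrix m n 𝕜) :
    (fromBlocks A B Bᴴ 1).PosSemidef ↔ (A - B * Bᴴ).PosSemidef := by
  have : Invertible (1 : Matrix n n 𝕜) := invertibleOne
  simpa using PosDef.fromBlocks₂₂ A B PosDef.one

theorem fromBlocks_dup_mul_mul_conjTranspose [Fintype m]
    (X : Matrix l m 𝕜) (R S : Matrix m m 𝕜) :
    (fromBlocks X X 0 0 : Matrix (l ⊕ n) (m ⊕ m) 𝕜) * fromBlocks R 0 0 S *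
        (fromBlocks X X 0 0)ᴴ = fromBlocks (X * (R + S) * Xᴴ) 0 0 (0 : Matrix n n 𝕜) := by
  simp [fromBlocks_conjTranspose, fromBlocks_multiply, Matrix.mul_add, Matrix.add_mul]

theorem posSemidef_fromBlocks_dup_iff [Fintype l] [Fintype m] [Fintype n] [DecidableEq m]
    (A : Matrix (l ⊕ n) (l ⊕ n) 𝕜) (X : Matrix l m 𝕜)
    {R S : Matrix m m 𝕜} (hR : R.PosDef) (hS : S.PosDef) :
    (fromBlocks A (fromBlocks X X 0 0) (fromBlocks X X 0 0)ᴴ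
        (fromBlocks R⁻¹ 0 0 S⁻¹)).PosSemidef ↔
      (A - fromBlocks (X * (R + S) * Xᴴ) 0 0 0).PosSemidef := by
  have hD := PosDef.fromBlocks_zero_zero hR.inv hS.inv
  have : Invertible (fromBlocks R⁻¹ 0 0 S⁻¹) := hD.isUnit.invertible
  rw [PosDef.fromBlocks₂₂ A _ hD, inv_fromBlocks_zero_zero hR.inv.isUnit hS.inv.isUnit,
    nonsing_inv_nonsing_inv R (isUnit_iff_isUnit_det R |>.1 hR.isUnit),
    nonsing_inv_nonsing_inv S (isUnit_iff_isUnit_det S |>.1 hS.isUnit),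
    fromBlocks_dup_mul_mul_conjTranspose]

end Matrix

theorem lmi_reformulation_utility_general {p n m : ℕ}
    (Q : Matrix (Fin p) (Fin p) ℝ)
    (M : Matrix (Fin p) (Fin n) ℝ)
    (K : Matrix (Fin n) (Fin m) ℝ)
    (C : Matrix (Fin m) (Fin n) ℝ)
    (Sig : Matrix (Fin n) (Fin n) ℝ) (hSig : Sig.PosSemidef)
    (Rs Rd : Matrix (Fin m) (Fin m) ℝ) (hRs : Rs.PosDef) (hRd : Rd.PosDef) :
    (Q - (M * (1 - K * C) * Sig * (1 - K * C)ᵀ * Mᵀ +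
        M * K * (Rs + Rd) * Kᵀ * Mᵀ)).PosSemidef ↔
    (Matrix.fromBlocks
      (Matrix.fromBlocks Q (M * (1 - K * C) * hSig.sqrt) (hSig.sqrt * (1 - K * C)ᵀ * Mᵀ) 1)
      (Matrix.fromBlocks (M * K) (M * K) 0 0)
      (Matrix.fromBlocks (Kᵀ * Mᵀ) 0 (Kᵀ * Mᵀ) 0)
      (Matrix.fromBlocks Rs⁻¹ 0 0 Rd⁻¹)).PosSemidef := by
  set B := M * (1 - K * C) * hSig.sqrt
  have hBH : Bᴴ = hSig.sqrt * (1 - K * C)ᵀ * Mᵀ := by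
    rw [conjTranspose_mul, conjTranspose_mul, hSig.sqrt_isHermitian.eq,
      conjTranspose_eq_transpose_of_trivial, conjTranspose_eq_transpose_of_trivial,
      Matrix.mul_assoc]
  have hBB : B * Bᴴ = M * (1 - K * C) * Sig * (1 - K * C)ᵀ * Mᵀ := by
    rw [hBH]
    simp only [B, Matrix.mul_assoc, ← Matrix.mul_assoc hSig.sqrt hSig.sqrt, hSig.sqrt_mul_self]
  have hXH : (fromBlocks (M * K) (M * K) 0 0 : Matrix (Fin p ⊕ Fin n) (Fin m ⊕ Fin m) ℝ)ᴴ =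
      fromBlocks (Kᵀ * Mᵀ) 0 (Kᵀ * Mᵀ) 0 := by
    rw [fromBlocks_conjTranspose]
    simp [conjTranspose_eq_transpose_of_trivial]
  rw [← hBH, ← hXH, posSemidef_fromBlocks_dup_iff _ _ hRs hRd, fromBlocks_sub, sub_zero,
    sub_zero, sub_zero, posSemidef_fromBlocks_one_iff, hBB, conjTranspose_eq_transpose_of_trivial,
    transpose_mul, sub_sub, add_comm, ← Matrix.mul_assoc]

theorem lmi_reformulation_utility {p n m : ℕ}
    (Q : Matrix (Fin p) (Fin p) ℝ) (hQ : Q.IsHermitian)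
    (M : Matrix (Fin p) (Fin n) ℝ)
    (K : Matrix (Fin n) (Fin m) ℝ)
    (C : Matrix (Fin m) (Fin n) ℝ)
    (Sig : Matrix (Fin n) (Fin n) ℝ) (hSig : Sig.PosSemidef)
    (Rs Rd : Matrix (Fin m) (Fin m) ℝ) (hRs : Rs.PosDef) (hRd : Rd.PosDef) :
    (Q - (M * (1 - K * C) * Sig * (1 - K * C)ᵀ * Mᵀ +
        M * K * (Rs + Rd) * Kᵀ * Mᵀ)).PosSemidef ↔
    (Matrix.fromBlocks
      (Matrix.fromBlocks Q (M * (1 - K * C) * hSig.sqrt) (hSig.sqrt * (1 - K * C)ᵀ * Mᵀ) 1)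
      (Matrix.fromBlocks (M * K) (M * K) 0 0)
      (Matrix.fromBlocks (Kᵀ * Mᵀ) 0 (Kᵀ * Mᵀ) 0)
      (Matrix.fromBlocks Rs⁻¹ 0 0 Rd⁻¹)).PosSemidef :=
  lmi_reformulation_utility_general Q M K C Sig hSig Rs Rd hRs hRd
end
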